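/- There exists a distributivity matrix of height 𝔥 (i.e., a witnessing family of 𝔥 many mad families with no common mad refinement can be chosen to be refining), and every distributivity matrix of height λ satisfies |λ| ≥ 𝔥; hence 𝔥 is the minimal height of a distributivity matrix. -/

import Mathlib

/-- `b ⊆* a`: `b \ a` is finite. -/
def AlmostSubset (b a : Set ℕ) : Prop := (b \ a).Finite

/-- A mad family on ℕ: a maximal almost disjoint family of infinite subsets of ℕ. -/
def IsMadFamily (A : Set (Set ℕ)) : Prop :=
  (∀ a ∈ A, a.Infinite) ∧
  (A.Pairwise fun a a' => (a ∩ a').Finite) ∧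
  (∀ b : Set ℕ, b.Infinite → ∃ a ∈ A, (b ∩ a).Infinite)

/-- `B` refines `A`: every element of `B` is almost included in some element of `A`. -/
def Refines (B A : Set (Set ℕ)) : Prop := ∀ b ∈ B, ∃ a ∈ A, AlmostSubset b a

/-- A distributivity matrix of height `lam`: a refining system of mad families
indexed by the ordinals below `lam`, without common (mad) refinement. -/
def IsDistribMatrix (lam : Ordinal) (A : Ordinal → Set (Set ℕ)) : Prop :=
  (∀ ξ < lam, IsMadFamily (A ξ)) ∧
  (∀ ξ η : Ordinal, ξ ≤ η → η < lam → Refines (A η) (A ξ)) ∧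
  ¬ ∃ B : Set (Set ℕ), IsMadFamily B ∧ ∀ ξ < lam, Refines B (A ξ)


/-- The distributivity number `𝔥`: the smallest cardinality of a family of mad
families on ℕ such that no single mad family refines all of them. -/
noncomputable def distributivityNumber : Cardinal :=
  sInf { κ : Cardinal | ∃ (ι : Type) (A : ι → Set (Set ℕ)),
    Cardinal.mk ι = κ ∧ (∀ i, IsMadFamily (A i)) ∧
    ¬ ∃ B : Set (Set ℕ), IsMadFamily B ∧ ∀ i, Refines B (A i) }

/-!
By the definition of `𝔥`, fewer than `𝔥` mad families have a common mad refinement. Enumerate a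
witnessing family `{W ξ : ξ < 𝔥}` and choose, by transfinite recursion, `M ξ` to be a common mad
refinement of `W ξ` and all `M η` with `η < ξ`: these are `|ξ| + 1 < 𝔥` families, as `𝔥` is
infinite (finitely many mad families are refined by their pairwise intersections). A mad family
refining every `M ξ` would refine every `W ξ`, so `M` is a distributivity matrix of height `𝔥`.
Conversely, the levels of a distributivity matrix of height `λ` are at most `|λ|` mad families
without common refinement.
-/

universe u

open Set
open scoped Cardinal

def HasCommonRefinement (S : Set (Set (Set ℕ))) : Prop :=
  ∃ B, IsMadFamily B ∧ ∀ A ∈ S, Refines B A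

theorem hasCommonRefinement_image_iff {α : Type*} (f : α → Set (Set ℕ)) (s : Set α) :
    HasCommonRefinement (f '' s) ↔ ∃ B, IsMadFamily B ∧ ∀ x ∈ s, Refines B (f x) := by
  simp only [HasCommonRefinement, forall_mem_image]

theorem hasCommonRefinement_range_iff {ι : Type*} (f : ι → Set (Set ℕ)) :
    HasCommonRefinement (range f) ↔ ∃ B, IsMadFamily B ∧ ∀ i, Refines B (f i) := by
  simp only [HasCommonRefinement, forall_mem_range]

theorem AlmostSubset.refl (a : Set ℕ) : AlmostSubset a a := by
  simp [AlmostSubset]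

theorem AlmostSubset.trans {a b c : Set ℕ} (hab : AlmostSubset a b) (hbc : AlmostSubset b c) :
    AlmostSubset a c :=
  (hab.union hbc).subset fun x ⟨hxa, hxc⟩ => by
    by_cases hxb : x ∈ b
    exacts [Or.inr ⟨hxb, hxc⟩, Or.inl ⟨hxa, hxb⟩]

theorem Refines.refl (A : Set (Set ℕ)) : Refines A A :=
  fun a ha => ⟨a, ha, AlmostSubset.refl a⟩

theorem Refines.trans {A B C : Set (Set ℕ)} (hCB : Refines C B) (hBA : Refines B A) :
    Refines C A := fun c hc =>
  let ⟨b, hb, hcb⟩ := hCB c hc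
  let ⟨a, ha, hba⟩ := hBA b hb
  ⟨a, ha, hcb.trans hba⟩

theorem isMadFamily_singleton_univ : IsMadFamily {univ} :=
  ⟨by simpa using infinite_univ, pairwise_singleton _ _, fun b hb => ⟨univ, rfl, by simpa using hb⟩⟩

theorem isMadFamily_pair_compl {X : Set ℕ} (hX : X.Infinite) (hXc : Xᶜ.Infinite) :
    IsMadFamily {X, Xᶜ} := by
  refine ⟨by simp [hX, hXc], ?_, fun b hb => ?_⟩
  · refine pairwise_pair.2 fun _ => ⟨?_, ?_⟩ <;> simp
  · by_contra! h
    simp only [mem_insert_iff, mem_singleton_iff, forall_eq_or_imp, forall_eq] at h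
    exact hb ((h.1.union h.2).subset fun x hx => by by_cases x ∈ X <;> simp_all)

theorem IsMadFamily.exists_common_refinement {A B : Set (Set ℕ)} (hA : IsMadFamily A)
    (hB : IsMadFamily B) : ∃ C, IsMadFamily C ∧ Refines C A ∧ Refines C B := by
  refine ⟨{c | c.Infinite ∧ ∃ a ∈ A, ∃ b ∈ B, c = a ∩ b}, ⟨fun c hc => hc.1, ?_, ?_⟩, ?_, ?_⟩
  · rintro _ ⟨-, a, ha, b, hb, rfl⟩ _ ⟨-, a', ha', b', hb', rfl⟩ hne
    by_cases haa' : a = a'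
    · subst haa'
      exact (hB.2.1 hb hb' fun h => hne (by rw [h])).subset fun x hx => ⟨hx.1.2, hx.2.2⟩
    · exact (hA.2.1 ha ha' haa').subset fun x hx => ⟨hx.1.1, hx.2.1⟩
  · intro c hc
    obtain ⟨a, ha, hca⟩ := hA.2.2 c hc
    obtain ⟨b, hb, hcab⟩ := hB.2.2 _ hca
    rw [inter_assoc] at hcab
    exact ⟨a ∩ b, ⟨hcab.mono inter_subset_right, a, ha, b, hb, rfl⟩, hcab⟩
  · rintro _ ⟨-, a, ha, b, -, rfl⟩
    exact ⟨a, ha, finite_empty.subset fun x hx => hx.2 hx.1.1⟩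
  · rintro _ ⟨-, a, -, b, hb, rfl⟩
    exact ⟨b, hb, finite_empty.subset fun x hx => hx.2 hx.1.2⟩

theorem hasCommonRefinement_of_finite {S : Set (Set (Set ℕ))} (hS : S.Finite)
    (hmad : ∀ A ∈ S, IsMadFamily A) : HasCommonRefinement S := by
  induction S, hS using Set.Finite.induction_on with
  | empty => exact ⟨{univ}, isMadFamily_singleton_univ, by simp⟩
  | @insert A S _ _ ih =>
    obtain ⟨B, hB, hBS⟩ := ih fun A' hA' => hmad A' (mem_insert_of_mem A hA')
    obtain ⟨C, hC, hCB, hCA⟩ := hB.exists_common_refinement (hmad A (mem_insert A S))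
    exact ⟨C, hC, forall_mem_insert.2 ⟨hCA, fun A' hA' => hCB.trans (hBS A' hA')⟩⟩

theorem Set.Infinite.exists_infinite_subset_infinite_diff {α : Type*} {a : Set α}
    (ha : a.Infinite) : ∃ X ⊆ a, X.Infinite ∧ (a \ X).Infinite := by
  obtain ⟨t, u, rfl, htu, hcard⟩ := ha.exists_union_disjoint_cardinal_eq_of_infinite
  have ht : t.Infinite := fun ht =>
    ha (ht.union (finite_coe_iff.1 (Cardinal.mk_lt_aleph0_iff.1 (hcard ▸ ht.lt_aleph0))))
  have hu : u.Infinite := fun hu => ha ((finite_coe_iff.1 (Cardinal.mk_lt_aleph0_iff.1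
    (hcard.symm ▸ hu.lt_aleph0))).union hu)
  refine ⟨t, subset_union_left, ht, hu.mono fun x hx => ⟨Or.inr hx, htu.notMem_of_mem_right hx⟩⟩

def infiniteBipartitions : Set (Set (Set ℕ)) :=
  {A | ∃ X : Set ℕ, X.Infinite ∧ Xᶜ.Infinite ∧ A = {X, Xᶜ}}

theorem isMadFamily_of_mem_infiniteBipartitions {A : Set (Set ℕ)}
    (hA : A ∈ infiniteBipartitions) : IsMadFamily A :=
  let ⟨_, hX, hXc, hA⟩ := hA
  hA ▸ isMadFamily_pair_compl hX hXc

theorem not_hasCommonRefinement_infiniteBipartitions :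
    ¬ HasCommonRefinement infiniteBipartitions := by
  rintro ⟨B, hB, hBA⟩
  obtain ⟨a, haB, -⟩ := hB.2.2 univ infinite_univ
  obtain ⟨X, hXa, hX, haX⟩ := (hB.1 a haB).exists_infinite_subset_infinite_diff
  obtain ⟨Y, hY, hY'⟩ := hBA _ ⟨X, hX, haX.mono fun x hx => hx.2, rfl⟩ a haB
  rcases hY with rfl | rfl
  · exact haX hY'
  · exact hX (hY'.subset fun x hx => ⟨hXa hx, not_not.2 hx⟩)

theorem distributivityNumber_le_mk {S : Set (Set (Set ℕ))} (hmad : ∀ A ∈ S, IsMadFamily A)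
    (hS : ¬ HasCommonRefinement S) : distributivityNumber ≤ #S :=
  csInf_le' ⟨S, Subtype.val, rfl, fun A => hmad A A.2,
    by rwa [← hasCommonRefinement_range_iff, Subtype.range_coe]⟩

theorem hasCommonRefinement_of_mk_lt {S : Set (Set (Set ℕ))} (hmad : ∀ A ∈ S, IsMadFamily A)
    (hS : #S < distributivityNumber) : HasCommonRefinement S :=
  by_contra fun h => (distributivityNumber_le_mk hmad h).not_gt hS

theorem exists_not_hasCommonRefinement_mk_eq_distributivityNumber :
    ∃ S : Set (Set (Set ℕ)), (∀ A ∈ S, IsMadFamily A) ∧ ¬ HasCommonRefinement S ∧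
      #S = distributivityNumber := by
  obtain ⟨ι, F, hF, hmad, hno⟩ : distributivityNumber ∈ _ := csInf_mem
    ⟨_, _, Subtype.val, rfl, fun A => isMadFamily_of_mem_infiniteBipartitions A.2, by
      rw [← hasCommonRefinement_range_iff, Subtype.range_coe]
      exact not_hasCommonRefinement_infiniteBipartitions⟩
  rw [← hasCommonRefinement_range_iff] at hno
  have hmad' : ∀ A ∈ range F, IsMadFamily A := forall_mem_range.2 hmad
  exact ⟨range F, hmad', hno,
    le_antisymm (hF ▸ Cardinal.mk_range_le) (distributivityNumber_le_mk hmad' hno)⟩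

theorem aleph0_le_distributivityNumber : Cardinal.aleph0 ≤ distributivityNumber := by
  obtain ⟨S, hmad, hS, hcard⟩ := exists_not_hasCommonRefinement_mk_eq_distributivityNumber
  by_contra! h
  exact hS (hasCommonRefinement_of_finite
    (finite_coe_iff.1 (Cardinal.mk_lt_aleph0_iff.1 (hcard ▸ h))) hmad)

theorem mk_image_Iio_le_card {α : Type u} (f : Ordinal.{u} → α) (o : Ordinal.{u}) :
    #(f '' Iio o) ≤ o.card := by
  simpa [← Ordinal.lift_card] using Cardinal.mk_image_le_lift (f := f) (s := Iio o)

theorem exists_image_Iio_eq {α : Type u} [Nonempty α] {S : Set α} {o : Ordinal.{u}}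
    (h : #S = o.card) : ∃ f : Ordinal.{u} → α, f '' Iio o = S := by
  obtain ⟨e⟩ : Nonempty (Iio o ≃ S) := Cardinal.lift_mk_eq'.1 (by simp [h])
  refine ⟨fun ξ => if hξ : ξ < o then e ⟨ξ, hξ⟩ else Classical.arbitrary α, ?_⟩
  ext x
  constructor
  · rintro ⟨ξ, hξ, rfl⟩
    simp [show ξ < o from hξ]
  · intro hx
    obtain ⟨⟨ξ, hξ⟩, hex⟩ := e.surjective ⟨x, hx⟩
    exact ⟨ξ, hξ, by simp [show ξ < o from hξ, hex]⟩

noncomputable def refiningMatrix (W : Ordinal → Set (Set ℕ)) : Ordinal → Set (Set ℕ) :=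
  Ordinal.lt_wf.fix fun ξ M => Classical.epsilon fun B =>
    IsMadFamily B ∧ ∀ A ∈ insert (W ξ) (range fun η : Iio ξ => M η η.2), Refines B A

theorem refiningMatrix_eq (W : Ordinal → Set (Set ℕ)) (ξ : Ordinal) :
    refiningMatrix W ξ = Classical.epsilon fun B =>
      IsMadFamily B ∧ ∀ A ∈ insert (W ξ) (refiningMatrix W '' Iio ξ), Refines B A := by
  rw [refiningMatrix, WellFounded.fix_eq, image_eq_range]

theorem refiningMatrix_spec {W : Ordinal.{0} → Set (Set ℕ)}
    (hW : ∀ ξ < distributivityNumber.ord, IsMadFamily (W ξ)) {ξ : Ordinal}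
    (hξ : ξ < distributivityNumber.ord) :
    IsMadFamily (refiningMatrix W ξ) ∧
      ∀ A ∈ insert (W ξ) (refiningMatrix W '' Iio ξ), Refines (refiningMatrix W ξ) A := by
  induction ξ using WellFoundedLT.induction with
  | _ ξ ih =>
    have hmad : ∀ A ∈ insert (W ξ) (refiningMatrix W '' Iio ξ), IsMadFamily A :=
      forall_mem_insert.2 ⟨hW ξ hξ, forall_mem_image.2 fun η hη => (ih η hη (hη.trans hξ)).1⟩
    have hcard : #(insert (W ξ) (refiningMatrix W '' Iio ξ) : Set _) < distributivityNumber :=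
      calc _ ≤ #(refiningMatrix W '' Iio ξ) + 1 := Cardinal.mk_insert_le
        _ ≤ ξ.card + 1 := add_le_add_left (mk_image_Iio_le_card _ ξ) 1
        _ < distributivityNumber :=
          Cardinal.add_lt_of_lt aleph0_le_distributivityNumber (Cardinal.lt_ord.1 hξ)
            (Cardinal.one_lt_aleph0.trans_le aleph0_le_distributivityNumber)
    rw [refiningMatrix_eq]
    exact Classical.epsilon_spec (hasCommonRefinement_of_mk_lt hmad hcard)

theorem isDistribMatrix_refiningMatrix {W : Ordinal.{0} → Set (Set ℕ)}
    (hW : ∀ ξ < distributivityNumber.ord, IsMadFamily (W ξ))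
    (hno : ¬ HasCommonRefinement (W '' Iio distributivityNumber.ord)) :
    IsDistribMatrix distributivityNumber.ord (refiningMatrix W) := by
  refine ⟨fun ξ hξ => (refiningMatrix_spec hW hξ).1, fun ξ η hξη hη => ?_, ?_⟩
  · rcases hξη.lt_or_eq with hlt | rfl
    · exact (refiningMatrix_spec hW hη).2 _ (mem_insert_of_mem _ (mem_image_of_mem _ hlt))
    · exact Refines.refl _
  · rintro ⟨B, hB, hBM⟩
    refine hno ((hasCommonRefinement_image_iff W _).2 ⟨B, hB, fun ξ hξ => ?_⟩)
    exact (hBM ξ hξ).trans ((refiningMatrix_spec hW hξ).2 _ (mem_insert _ _))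

theorem IsDistribMatrix.distributivityNumber_le_card {lam : Ordinal} {A : Ordinal → Set (Set ℕ)}
    (hA : IsDistribMatrix lam A) : distributivityNumber ≤ lam.card := by
  have hmad : ∀ B ∈ A '' Iio lam, IsMadFamily B := forall_mem_image.2 hA.1
  have hno : ¬ HasCommonRefinement (A '' Iio lam) := by
    rw [hasCommonRefinement_image_iff]
    exact hA.2.2
  exact (distributivityNumber_le_mk hmad hno).trans (mk_image_Iio_le_card A lam)

/-- There is a distributivity matrix of height `𝔥`, and every distributivity
matrix of height `lam` satisfies `|lam| ≥ 𝔥`; hence `𝔥` is the minimal height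
of a distributivity matrix. -/
theorem distributivityNumber_minimal_matrix_height :
    (∃ A : Ordinal → Set (Set ℕ), IsDistribMatrix distributivityNumber.ord A) ∧
    (∀ (lam : Ordinal) (A : Ordinal → Set (Set ℕ)),
      IsDistribMatrix lam A → distributivityNumber ≤ lam.card) := by
  refine ⟨?_, fun _ _ hA => hA.distributivityNumber_le_card⟩
  obtain ⟨S, hmad, hno, hcard⟩ := exists_not_hasCommonRefinement_mk_eq_distributivityNumber
  obtain ⟨W, rfl⟩ := exists_image_Iio_eq (o := distributivityNumber.ord)
    (hcard.trans (Cardinal.card_ord _).symm)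
  exact ⟨_, isDistribMatrix_refiningMatrix (fun ξ hξ => hmad _ (mem_image_of_mem W hξ)) hno⟩
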